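/- arXiv:1604.00341 — 5 statements merged into one kernel-verified Lean document; each statement's English description precedes it below -/
import Mathlib

section
/- In the group G × G with operation (a, x)·(b, y) = (ab[b⁻¹xb, y⁻¹], y⁻¹(b⁻¹xb)y²), the subset {1} × G is a right transversal to the subgroup H = G × {1}: every element of G × G is uniquely expressible as h·s with h ∈ H and s ∈ {1} × G. -/
def gmul {G : Type*} [Group G] (p q : G × G) : G × G :=
  ⟨p.1 * q.1 * ((q.1⁻¹ * p.2 * q.1)⁻¹ * (q.2⁻¹)⁻¹ * (q.1⁻¹ * p.2 * q.1) * q.2⁻¹),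
   q.2⁻¹ * (q.1⁻¹ * p.2 * q.1) * q.2 ^ 2⟩

/-- `{1} × G` is a right transversal to the subgroup `H = G × {1}` in
`(G × G, gmul)`: every element is uniquely expressible as `h · s` with
`h ∈ G × {1}` and `s ∈ {1} × G`. -/
theorem stmt3 {G : Type*} [Group G] (p : G × G) :
    ∃! hs : G × G, gmul ((hs.1, (1 : G))) (((1 : G), hs.2)) = p := by
  have key : ∀ q : G × G, gmul ((q.1, (1:G))) (((1:G), q.2)) = q := by
    intro q
    simp only [gmul]
    refine Prod.ext ?_ ?_ <;> simp
    group
  exact ⟨p, key p, fun q hq => by rw [← hq, key q]⟩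
end

section
/- In the group G × G with operation (a, x)·(b, y) = (ab[b⁻¹xb, y⁻¹], y⁻¹(b⁻¹xb)y²), the transversal S = {1} × G is a gyrotransversal to H = G × {1}: S = S⁻¹ and h⁻¹sh ∈ S for all s ∈ S, h ∈ H. -/
def ginv {G : Type*} [Group G] (p : G × G) : G × G := (p.1⁻¹, p.1⁻¹ * p.2⁻¹ * p.1)

/-- `S = {1} × G` is a gyrotransversal to `H = G × {1}`: `S = S⁻¹` and
`h⁻¹ s h ∈ S` for all `s ∈ S`, `h ∈ H`. -/
theorem stmt4 {G : Type*} [Group G] :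
    (∀ s : G × G, s.1 = 1 → (ginv s).1 = 1) ∧
    (∀ s h : G × G, s.1 = 1 → h.2 = 1 →
      (gmul (gmul (ginv h) s) h).1 = 1) := by
  constructor
  · intro s hs; simp [ginv, hs]
  · intro s h hs hh
    simp [gmul, ginv, hs, hh]
    group
end

section
/- For any n ∈ ℕ and any group G, the map g : G → G given by g(x) = xⁿ satisfies g(x⁻¹) = g(x)⁻¹ and g(h⁻¹xh) = h⁻¹g(x)h for all x, h ∈ G; consequently S_g = {(xⁿ, x) : x ∈ G} is a gyrotransversal to G × {1} in the group G × G with operation (a, x)·(b, y) = (ab[b⁻¹xb, y⁻¹], y⁻¹(b⁻¹xb)y²). -/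
/-- `g(x) = xⁿ` is inverse-preserving and equivariant, and hence
`S_g = {(xⁿ, x) : x ∈ G}` is a gyrotransversal to `G × {1}` in `(G × G, gmul)`:
it is a right transversal, closed under inverses, and closed under conjugation
by elements of `G × {1}`. -/
theorem stmt5 {G : Type*} [Group G] (n : ℕ) :
    (∀ x : G, (x⁻¹) ^ n = (x ^ n)⁻¹) ∧
    (∀ x h : G, (h⁻¹ * x * h) ^ n = h⁻¹ * x ^ n * h) ∧
    (∀ p : G × G, ∃! x : G, ∃ h : G, p = gmul ((h, (1 : G))) ((x ^ n, x))) ∧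
    (∀ x : G, ∃ y : G, ginv ((x ^ n, x)) = (y ^ n, y)) ∧
    (∀ x h : G, ∃ y : G,
      gmul (gmul (ginv ((h, (1 : G)))) ((x ^ n, x))) ((h, (1 : G))) = (y ^ n, y)) := by

  have conj : ∀ x h : G, (h⁻¹ * x * h) ^ n = h⁻¹ * x ^ n * h := by
    intro x h
    induction n with
    | zero => simp
    | succ k ih => rw [pow_succ, pow_succ, ih]; group
  refine ⟨fun x => inv_pow x n, conj, fun p => ?_, fun x => ?_, fun x h => ?_⟩
  · refine ⟨p.2, ⟨p.1 * (p.2 ^ n)⁻¹, ?_⟩, ?_⟩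
    · simp [gmul]; group
    · rintro y ⟨h, rfl⟩
      simp [gmul]; group
  · refine ⟨(x ^ n)⁻¹ * x⁻¹ * x ^ n, ?_⟩
    simp only [ginv, Prod.mk.injEq]
    refine ⟨?_, trivial⟩
    rw [conj x⁻¹ (x ^ n), inv_pow]; group
  · refine ⟨h⁻¹ * x * h, ?_⟩
    simp only [ginv, gmul, Prod.mk.injEq]
    constructor
    · rw [conj]; group
    · group
end

section
/- Let G be a group and k a class assigned function on G, with x o_k y = y^{-k(y)} x y^{k(y)+1}. For all x, y, z ∈ G, (x o_k y) o_k z = (a⁻¹ x a) o_k (y o_k z), where a = y^{k(y)} (yz)^{-k(y o_k z)} z^{k(z)}. -/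
def Rrel {G : Type*} [Group G] (a b : G) : Prop :=
  a = b ∨ a = b⁻¹ ∨ (∃ u : G, a = u⁻¹ * b * u) ∨ (∃ u : G, a = u⁻¹ * b⁻¹ * u)

/-- The deformed operation `x o_k y = y^{-k(y)} x y^{k(y)+1}`. -/
def okOp {G : Type*} [Group G] (k : G → ℕ) (x y : G) : G :=
  (y ^ k y)⁻¹ * x * y ^ (k y + 1)

/-- `(x o_k y) o_k z = (a⁻¹ x a) o_k (y o_k z)` where
`a = y^{k(y)} (yz)^{-k(y o_k z)} z^{k(z)}`. -/
theorem stmt12 {G : Type*} [Group G] (k : G → ℕ) (hk1 : k 1 = 0)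
    (hk : ∀ a b : G, Rrel a b → k a = k b) (x y z : G) :
    okOp k (okOp k x y) z =
      okOp k
        ((y ^ k y * ((y * z) ^ k (okOp k y z))⁻¹ * z ^ k z)⁻¹ * x *
          (y ^ k y * ((y * z) ^ k (okOp k y z))⁻¹ * z ^ k z))
        (okOp k y z) := by
  have hw : okOp k y z = (z ^ k z)⁻¹ * (y * z) * ((z ^ k z)⁻¹)⁻¹ := by
    simp only [okOp, inv_inv, pow_succ]
    group
  have hpow : ∀ m : ℕ, (okOp k y z) ^ m = (z ^ k z)⁻¹ * (y * z) ^ m * z ^ k z := by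
    intro m; rw [hw, conj_pow, inv_inv]
  generalize hm : k (okOp k y z) = m
  conv_lhs => rw [okOp, okOp]
  conv_rhs => rw [okOp, hm, hpow, hpow]
  group
end

section
/- Let G be a group and define x ⊙ y = y⁻¹xy². Then (G, ⊙) satisfies: x ⊙ 1 = x, x ⊙ x⁻¹ = 1, conjugations are automorphisms of (G, ⊙), and (x ⊙ y) ⊙ z = (a⁻¹xa) ⊙ (y ⊙ z) where a = y(yz)⁻¹z = y z⁻¹ y⁻¹ z. -/
/-- The Foguel–Ungar operation `x ⊙ y = y⁻¹ x y²`. -/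
def fuOp {G : Type*} [Group G] (x y : G) : G := y⁻¹ * x * y ^ 2

/-- `(G, ⊙)` satisfies `x ⊙ 1 = x`, `x ⊙ x⁻¹ = 1`, conjugations are
automorphisms, and the left gyroassociative-type law
`(x ⊙ y) ⊙ z = (a⁻¹ x a) ⊙ (y ⊙ z)` with `a = y (yz)⁻¹ z = y z⁻¹ y⁻¹ z`. -/
theorem stmt19 {G : Type*} [Group G] :
    (∀ x : G, fuOp x 1 = x) ∧
    (∀ x : G, fuOp x x⁻¹ = 1) ∧
    (∀ a x y : G, a⁻¹ * fuOp x y * a = fuOp (a⁻¹ * x * a) (a⁻¹ * y * a)) ∧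
    (∀ x y z : G,
      fuOp (fuOp x y) z =
        fuOp ((y * z⁻¹ * y⁻¹ * z)⁻¹ * x * (y * z⁻¹ * y⁻¹ * z)) (fuOp y z)) := by
  refine ⟨fun x => ?_, fun x => ?_, fun a x y => ?_, fun x y z => ?_⟩ <;>
    simp [fuOp, pow_two] <;> group
end
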